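/- Let d be the dual of a BIBD(v', b', r', k', λ') (so d has b = v' blocks, v = b' treatments, block size k = r', and incidence matrix N = N'ᵀ where N' is the BIBD's incidence matrix). Then the dual intrablock matrix C̃ = kI_b − NᵀR^{−1}N of d satisfies tr(C̃^+) = (b−1)^2/(bk−v), i.e., d attains the bound L̃ and has A_{tt}eff = 1. -/

import Mathlib

open BigOperators Matrix

/-- The four Penrose conditions: `Ap` is the Moore–Penrose inverse of `A`. -/
def IsMoorePenrose {n : ℕ} (A Ap : Matrix (Fin n) (Fin n) ℝ) : Prop :=
  A * Ap * A = A ∧ Ap * A * Ap = Ap ∧ (A * Ap)ᵀ = A * Ap ∧ (Ap * A)ᵀ = Ap * A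

/-- Uniqueness of the Moore–Penrose inverse. -/
lemma mp_unique {n : ℕ} (A X Y : Matrix (Fin n) (Fin n) ℝ)
    (hX : IsMoorePenrose A X) (hY : IsMoorePenrose A Y) : X = Y := by
  obtain ⟨hX1, hX2, hX3, hX4⟩ := hX
  obtain ⟨hY1, hY2, hY3, hY4⟩ := hY
  have hAX : A * X = A * Y := by
    calc A * X = (A * X)ᵀ := hX3.symm
      _ = Xᵀ * Aᵀ := Matrix.transpose_mul _ _
      _ = Xᵀ * (A * Y * A)ᵀ := by rw [hY1]
      _ = Xᵀ * (Aᵀ * (A * Y)ᵀ) := by rw [Matrix.transpose_mul (A * Y) A]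
      _ = Xᵀ * (Aᵀ * (A * Y)) := by rw [hY3]
      _ = (Xᵀ * Aᵀ) * (A * Y) := by rw [Matrix.mul_assoc]
      _ = (A * X)ᵀ * (A * Y) := by rw [Matrix.transpose_mul]
      _ = (A * X) * (A * Y) := by rw [hX3]
      _ = (A * X * A) * Y := by simp only [Matrix.mul_assoc]
      _ = A * Y := by rw [hX1]
  have hXA : X * A = Y * A := by
    calc X * A = (X * A)ᵀ := hX4.symm
      _ = Aᵀ * Xᵀ := Matrix.transpose_mul _ _
      _ = (A * Y * A)ᵀ * Xᵀ := by rw [hY1]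
      _ = ((Y * A)ᵀ * Aᵀ) * Xᵀ := by
          rw [show A * Y * A = A * (Y * A) from by rw [Matrix.mul_assoc],
            Matrix.transpose_mul]
      _ = ((Y * A) * Aᵀ) * Xᵀ := by rw [hY4]
      _ = (Y * A) * (Aᵀ * Xᵀ) := by rw [Matrix.mul_assoc]
      _ = (Y * A) * (X * A)ᵀ := by rw [Matrix.transpose_mul]
      _ = (Y * A) * (X * A) := by rw [hX4]
      _ = Y * (A * X * A) := by simp only [Matrix.mul_assoc]
      _ = Y * A := by rw [hX1]
  calc X = X * A * X := hX2.symm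
    _ = Y * A * X := by rw [hXA]
    _ = Y * (A * Y) := by rw [Matrix.mul_assoc, hAX]
    _ = Y := by rw [← Matrix.mul_assoc, hY2]

/-- The dual of a `BIBD(v',b',r',k',λ')` has `b = v'` blocks, `v = b'` treatments and
block size `k = r'`; its dual intrablock matrix `C̃ = r'I − (1/k')N'N'ᵀ` satisfies
`tr(C̃⁺) = (b−1)²/(bk−v) = (v'−1)²/(v'r'−b')`, attaining the bound `L̃` so `A_tt eff = 1`. -/
theorem stmt_16 (v' b' r' k' lam' : ℕ) (hv : 2 ≤ v') (hb : 0 < b') (hr : 0 < r')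
    (hk : 0 < k') (hlam : 0 < lam')
    (hbk : b' * k' = v' * r') (hlv : lam' * (v' - 1) = r' * (k' - 1))
    (N' : Matrix (Fin v') (Fin b') ℝ)
    (hrow : ∀ i, ∑ j, N' i j = (r' : ℝ)) (hcol : ∀ j, ∑ i, N' i j = (k' : ℝ))
    (hNNT : N' * N'ᵀ = ((r' : ℝ) - lam') • (1 : Matrix (Fin v') (Fin v') ℝ) +
      (lam' : ℝ) • Matrix.of (fun _ _ => (1 : ℝ)))
    (Ct Ctp : Matrix (Fin v') (Fin v') ℝ)
    (hCt : Ct = (r' : ℝ) • (1 : Matrix (Fin v') (Fin v') ℝ) - (k' : ℝ)⁻¹ • (N' * N'ᵀ))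
    (hmp : IsMoorePenrose Ct Ctp) :
    Ctp.trace = ((v' : ℝ) - 1) ^ 2 / ((v' : ℝ) * r' - b') := by
  -- basic positivity / casts
  have hv0 : (0 : ℝ) < (v' : ℝ) := by exact_mod_cast (by omega : 0 < v')
  have hk0 : (0 : ℝ) < (k' : ℝ) := by exact_mod_cast hk
  have hr0 : (0 : ℝ) < (r' : ℝ) := by exact_mod_cast hr
  have hl0 : (0 : ℝ) < (lam' : ℝ) := by exact_mod_cast hlam
  have hv1 : (1 : ℝ) ≤ (v' : ℝ) := by exact_mod_cast (by omega : 1 ≤ v')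
  have hlv' : (lam' : ℝ) * ((v' : ℝ) - 1) = (r' : ℝ) * ((k' : ℝ) - 1) := by
    have h := congrArg (fun n : ℕ => (n : ℝ)) hlv
    push_cast [Nat.cast_sub (by omega : 1 ≤ v'), Nat.cast_sub (by omega : 1 ≤ k')] at h
    linarith [h]
  have hbk' : (b' : ℝ) * (k' : ℝ) = (v' : ℝ) * (r' : ℝ) := by exact_mod_cast hbk
  set J : Matrix (Fin v') (Fin v') ℝ := Matrix.of (fun _ _ => (1 : ℝ)) with hJdef
  have hJJ : J * J = (v' : ℝ) • J := by
    ext i j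
    simp [hJdef, Matrix.mul_apply]
  have hJT : Jᵀ = J := by ext i j; simp [hJdef]
  set c : ℝ := (lam' : ℝ) * (v' : ℝ) / (k' : ℝ) with hcdef
  have hc0 : c ≠ 0 := by positivity
  set P : Matrix (Fin v') (Fin v') ℝ := (1 : Matrix (Fin v') (Fin v') ℝ) - ((v' : ℝ)⁻¹) • J
    with hPdef
  -- Ct = c • P
  have hCtP : Ct = c • P := by
    rw [hCt, hNNT, hPdef]
    have h1 : (r' : ℝ) - ((k' : ℝ))⁻¹ * ((r' : ℝ) - (lam' : ℝ)) = c := by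
      field_simp [hcdef]
      rw [show (k' : ℝ) * c = lam' * v' by rw [hcdef]; field_simp]
      nlinarith [hlv']
    have h2 : ((k' : ℝ))⁻¹ * (lam' : ℝ) = c * (v' : ℝ)⁻¹ := by
      field_simp [hcdef]
      rw [hcdef]; field_simp
    rw [smul_add, smul_smul, smul_smul, smul_sub, smul_smul]
    rw [sub_add_eq_sub_sub, ← sub_smul, h1, h2]
  -- P is symmetric idempotent
  have hPT : Pᵀ = P := by
    rw [hPdef, Matrix.transpose_sub, Matrix.transpose_smul, hJT, Matrix.transpose_one]
  have hPP : P * P = P := by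
    have h : (v' : ℝ)⁻¹ * ((v' : ℝ)⁻¹ * (v' : ℝ)) = (v' : ℝ)⁻¹ := by field_simp
    rw [hPdef]
    have h2 : (v' : ℝ)⁻¹ * (v' : ℝ) = 1 := inv_mul_cancel₀ (ne_of_gt hv0)
    simp only [Matrix.sub_mul, Matrix.mul_sub, Matrix.one_mul, Matrix.mul_one,
      Matrix.smul_mul, Matrix.mul_smul, hJJ, smul_smul, h, h2, one_smul, ← hJdef, smul_zero]
    abel_nf
    simp
  -- the explicit Moore–Penrose inverse
  have hcc : c * c⁻¹ = 1 := mul_inv_cancel₀ hc0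
  have hcc' : c⁻¹ * c = 1 := inv_mul_cancel₀ hc0
  have hB : IsMoorePenrose Ct (c⁻¹ • P) := by
    refine ⟨?_, ?_, ?_, ?_⟩
    · rw [hCtP]
      simp only [Matrix.smul_mul, Matrix.mul_smul, hPP, smul_smul]
      rw [hcc', mul_one]
    · rw [hCtP]
      simp only [Matrix.smul_mul, Matrix.mul_smul, hPP, smul_smul]
      rw [hcc, mul_one]
    · rw [hCtP]
      simp only [Matrix.smul_mul, Matrix.mul_smul, hPP, smul_smul, hcc,
        Matrix.transpose_smul, hPT]
    · rw [hCtP]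
      simp only [Matrix.smul_mul, Matrix.mul_smul, hPP, smul_smul, hcc',
        Matrix.transpose_smul, hPT]
  have hCtp : Ctp = c⁻¹ • P := mp_unique Ct Ctp (c⁻¹ • P) hmp hB
  -- compute the trace
  have htrJ : J.trace = (v' : ℝ) := by
    simp [Matrix.trace, Matrix.diag, hJdef]
  have htrP : P.trace = (v' : ℝ) - 1 := by
    rw [hPdef, Matrix.trace_sub, Matrix.trace_smul, htrJ, Matrix.trace_one]
    field_simp
    rw [Fintype.card_fin, smul_eq_mul, one_div, inv_mul_cancel₀ (ne_of_gt hv0)]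
  rw [hCtp, Matrix.trace_smul, htrP]
  -- arithmetic identity
  have hvr : (v' : ℝ) * (r' : ℝ) - (b' : ℝ) = c * ((v' : ℝ) - 1) := by
    have hb'' : (b' : ℝ) = (v' : ℝ) * (r' : ℝ) / (k' : ℝ) := by
      rw [eq_div_iff (ne_of_gt hk0)]
      linarith [hbk']
    rw [hb'', hcdef]
    field_simp
    nlinarith [hlv']
  rw [hvr]
  rw [smul_eq_mul]
  have hvm1 : (0 : ℝ) < (v' : ℝ) - 1 := by
    have : (2 : ℝ) ≤ (v' : ℝ) := by exact_mod_cast hv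
    linarith
  field_simp
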